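/- Let M be a Coxeter matrix with Coxeter group W, set of reflections T, Artin group A, standard epimorphism μ: A → W, and homomorphism U: A → Sym(ℤ × T) with U(σ_i) = U_i. Let g_1, g_2 ∈ A and (k, r) ∈ ℤ × T, and write (k_1, r_1) = U(g_1)(k, r) and (k_2, r_2) = U(g_2)(k, r). If μ(g_1) = μ(g_2), then r_1 = r_2 and k_1 ≡ k_2 (mod 2). -/

import Mathlib

open Function

/-- The alternating word `⟨i j⟩^m = i j i j ⋯` with `m` factors, in the free group. -/
def altWord {α : Type*} (i j : α) : ℕ → FreeGroup α
  | 0 => 1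
  | m + 1 => FreeGroup.of i * altWord j i m

/-- The braid relations of an Artin group of type `M` (an entry `0` encodes `∞`). -/
def artinRels {n : ℕ} (M : Matrix (Fin n) (Fin n) ℕ) : Set (FreeGroup (Fin n)) :=
  {r | ∃ i j : Fin n, i ≠ j ∧ M i j ≠ 0 ∧
      r = altWord i j (M i j) * (altWord j i (M i j))⁻¹}

/-- The relations of the Coxeter group of type `M`. -/
def coxRels {n : ℕ} (M : Matrix (Fin n) (Fin n) ℕ) : Set (FreeGroup (Fin n)) :=
  artinRels M ∪ {r | ∃ i : Fin n, r = FreeGroup.of i ^ 2}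

/-- The Artin group of type `M`. -/
abbrev ArtinGroup {n : ℕ} (M : Matrix (Fin n) (Fin n) ℕ) : Type :=
  PresentedGroup (artinRels M)

/-- The Coxeter group of type `M`, as the quotient of the Artin group by `σᵢ² = 1`. -/
abbrev CoxGroup {n : ℕ} (M : Matrix (Fin n) (Fin n) ℕ) : Type :=
  PresentedGroup (coxRels M)

/-- The standard generators `σᵢ` of the Artin group. -/
def σA {n : ℕ} (M : Matrix (Fin n) (Fin n) ℕ) (i : Fin n) : ArtinGroup M :=
  PresentedGroup.of i

/-- The standard generators `sᵢ` of the Coxeter group. -/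
def sC {n : ℕ} (M : Matrix (Fin n) (Fin n) ℕ) (i : Fin n) : CoxGroup M :=
  PresentedGroup.of i

lemma lift_of_eq_mk {n : ℕ} (M : Matrix (Fin n) (Fin n) ℕ) (r : FreeGroup (Fin n)) :
    FreeGroup.lift (fun i => (PresentedGroup.of i : CoxGroup M)) r
      = PresentedGroup.mk (coxRels M) r := by
  have h : (FreeGroup.lift (fun i => (PresentedGroup.of i : CoxGroup M)))
      = PresentedGroup.mk (coxRels M) :=
    FreeGroup.ext_hom _ _ (fun x => by simp [PresentedGroup.of])
  rw [h]

/-- The standard epimorphism `μ : A → W`. -/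
def stdEpi {n : ℕ} (M : Matrix (Fin n) (Fin n) ℕ) : ArtinGroup M →* CoxGroup M :=
  PresentedGroup.toGroup (f := fun i => (PresentedGroup.of i : CoxGroup M)) (by
    intro r hr
    rw [lift_of_eq_mk]
    exact (QuotientGroup.eq_one_iff r).mpr
      (Subgroup.subset_normalClosure (Set.mem_union_left _ hr)))

@[simp] lemma stdEpi_of {n : ℕ} (M : Matrix (Fin n) (Fin n) ℕ) (i : Fin n) :
    stdEpi M (σA M i) = sC M i :=
  PresentedGroup.toGroup.of _

/-- `φ : A → W` is ordinary if it is `α ∘ μ` for some automorphism `α` of `W`. -/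
def Ordinary {n : ℕ} {M : Matrix (Fin n) (Fin n) ℕ}
    (φ : ArtinGroup M →* CoxGroup M) : Prop :=
  ∃ α : CoxGroup M ≃* CoxGroup M, φ = α.toMonoidHom.comp (stdEpi M)

/-- The set of reflections of the Coxeter group of type `M`. -/
def Refl {n : ℕ} (M : Matrix (Fin n) (Fin n) ℕ) : Set (CoxGroup M) :=
  {t | ∃ (w : CoxGroup M) (i : Fin n), t = w * sC M i * w⁻¹}

lemma sC_sq {n : ℕ} (M : Matrix (Fin n) (Fin n) ℕ) (i : Fin n) :
    sC M i * sC M i = 1 := by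
  have h1 : (FreeGroup.of i ^ 2 : FreeGroup (Fin n))
      ∈ Subgroup.normalClosure (coxRels M) :=
    Subgroup.subset_normalClosure (Set.mem_union_right _ ⟨i, rfl⟩)
  have h2 : PresentedGroup.mk (coxRels M) (FreeGroup.of i ^ 2) = 1 :=
    (QuotientGroup.eq_one_iff _).mpr h1
  simpa [sq, map_mul, sC, PresentedGroup.of] using h2

lemma sC_inv {n : ℕ} (M : Matrix (Fin n) (Fin n) ℕ) (i : Fin n) :
    (sC M i)⁻¹ = sC M i :=
  inv_eq_of_mul_eq_one_right (sC_sq M i)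

lemma conj_mem_Refl {n : ℕ} (M : Matrix (Fin n) (Fin n) ℕ) (i : Fin n)
    {t : CoxGroup M} (ht : t ∈ Refl M) : sC M i * t * sC M i ∈ Refl M := by
  obtain ⟨w, j, rfl⟩ := ht
  refine ⟨sC M i * w, j, ?_⟩
  rw [mul_inv_rev, sC_inv]
  simp [mul_assoc]

lemma conj_eq_self_iff {n : ℕ} (M : Matrix (Fin n) (Fin n) ℕ) (i : Fin n)
    (t : CoxGroup M) : sC M i * t * sC M i = sC M i ↔ t = sC M i := by
  constructor
  · intro h
    have h2 : sC M i * (t * sC M i) = sC M i * 1 := by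
      rw [mul_one]; rw [← mul_assoc]; exact h
    have h3 : t * sC M i = 1 := mul_left_cancel h2
    calc t = t * sC M i * sC M i := by rw [mul_assoc, sC_sq, mul_one]
    _ = sC M i := by rw [h3, one_mul]
  · rintro rfl
    rw [sC_sq, one_mul]

open Classical in
/-- The underlying map of `Uᵢ` (with increment `e` on the distinguished reflection). -/
noncomputable def UFun {n : ℕ} (M : Matrix (Fin n) (Fin n) ℕ) (i : Fin n) (e : ℤ) :
    ℤ × Refl M → ℤ × Refl M := fun p =>
  if (p.2 : CoxGroup M) = sC M i then (p.1 + e, p.2)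
  else (p.1, ⟨sC M i * p.2 * sC M i, conj_mem_Refl M i p.2.2⟩)

lemma UFun_pos {n : ℕ} (M : Matrix (Fin n) (Fin n) ℕ) (i : Fin n) (e k : ℤ)
    (t : Refl M) (h : (t : CoxGroup M) = sC M i) : UFun M i e (k, t) = (k + e, t) := by
  simp only [UFun, h, if_pos]

lemma UFun_neg {n : ℕ} (M : Matrix (Fin n) (Fin n) ℕ) (i : Fin n) (e k : ℤ)
    (t : Refl M) (h : ¬ (t : CoxGroup M) = sC M i) :
    UFun M i e (k, t) = (k, ⟨sC M i * t * sC M i, conj_mem_Refl M i t.2⟩) := by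
  simp only [UFun, h, if_neg, if_false]

lemma UFun_inverse {n : ℕ} (M : Matrix (Fin n) (Fin n) ℕ) (i : Fin n) (e : ℤ) :
    Function.LeftInverse (UFun M i (-e)) (UFun M i e) := by
  rintro ⟨k, t⟩
  by_cases h : (t : CoxGroup M) = sC M i
  · rw [UFun_pos M i e k t h, UFun_pos M i (-e) (k + e) t h]
    simp
  · rw [UFun_neg M i e k t h]
    have h' : ¬ (sC M i * (t : CoxGroup M) * sC M i = sC M i) := fun hc =>
      h ((conj_eq_self_iff M i t).mp hc)
    rw [UFun_neg M i (-e) k _ h']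
    refine Prod.ext rfl (Subtype.ext ?_)
    show sC M i * (sC M i * (t : CoxGroup M) * sC M i) * sC M i = (t : CoxGroup M)
    calc sC M i * (sC M i * (t : CoxGroup M) * sC M i) * sC M i
        = (sC M i * sC M i) * ((t : CoxGroup M) * (sC M i * sC M i)) := by
          simp only [mul_assoc]
      _ = (t : CoxGroup M) := by rw [sC_sq]; simp

/-- The permutation `Uᵢ` of `ℤ × T`: `(k, t) ↦ (k, sᵢ t sᵢ)` if `t ≠ sᵢ`, and
`(k, sᵢ) ↦ (k + 1, sᵢ)`. -/
noncomputable def Uperm {n : ℕ} (M : Matrix (Fin n) (Fin n) ℕ) (i : Fin n) :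
    Equiv.Perm (ℤ × Refl M) where
  toFun := UFun M i 1
  invFun := UFun M i (-1)
  left_inv := UFun_inverse M i 1
  right_inv := by
    have h := UFun_inverse M i (-1)
    rw [neg_neg] at h
    exact h

/-!
Reducing the integer coordinate mod 2 turns each `Uᵢ` into a permutation `Vᵢ` of
`ℤ/2 × T` which is an involution. Since the projection `ℤ × T → ℤ/2 × T` is surjective and
intertwines `Uᵢ` with `Vᵢ`, the braid relations satisfied by the `Uᵢ` descend to the `Vᵢ`,
so `sᵢ ↦ Vᵢ` defines an action of `W` with `π ∘ U(g) = V(μ g) ∘ π` for every `g ∈ A`.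
-/

lemma Function.Semiconj.of_closure_eq_top {G X Y : Type*} [Group G] {S : Set G}
    (hS : Subgroup.closure S = ⊤) (φ : G →* Equiv.Perm X) (ψ : G →* Equiv.Perm Y)
    (f : X → Y) (h : ∀ s ∈ S, Semiconj f (φ s) (ψ s)) (g : G) :
    Semiconj f (φ g) (ψ g) := by
  have hg : g ∈ Subgroup.closure S := hS ▸ Subgroup.mem_top g
  induction hg using Subgroup.closure_induction with
  | mem s hs => exact h s hs
  | one => simpa using Semiconj.id_right
  | mul a b _ _ ha hb => simpa using ha.comp_right hb
  | inv a _ ha =>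
    simpa using ha.inverses_right (φ a).apply_symm_apply (ψ a).symm_apply_apply

lemma Function.Semiconj.eq_one_of_surjective {X Y : Type*} {f : X → Y} {σ : Equiv.Perm Y}
    (h : Semiconj f id σ) (hf : Surjective f) : σ = 1 := by
  ext y
  obtain ⟨x, rfl⟩ := hf y
  exact (h x).symm

section

variable {n : ℕ} (M : Matrix (Fin n) (Fin n) ℕ)

lemma sC_mul_sC_mul_mul_sC (i : Fin n) (t : CoxGroup M) :
    sC M i * (sC M i * t * sC M i) * sC M i = t := by
  simp only [← mul_assoc, sC_sq, one_mul, mul_assoc t, mul_one]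

def parityProj : ℤ × Refl M → ZMod 2 × Refl M := fun p => ((p.1 : ZMod 2), p.2)

lemma parityProj_surjective : Surjective (parityProj M) := fun ⟨c, t⟩ =>
  ⟨((c.cast : ℤ), t), Prod.ext (ZMod.intCast_zmod_cast c) rfl⟩

open Classical in
noncomputable def parityFun (i : Fin n) : ZMod 2 × Refl M → ZMod 2 × Refl M := fun p =>
  if (p.2 : CoxGroup M) = sC M i then (p.1 + 1, p.2)
  else (p.1, ⟨sC M i * p.2 * sC M i, conj_mem_Refl M i p.2.2⟩)

lemma parityFun_involutive (i : Fin n) : Involutive (parityFun M i) := by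
  rintro ⟨c, t⟩
  by_cases h : (t : CoxGroup M) = sC M i
  · simp [parityFun, h, add_assoc, show (1 + 1 : ZMod 2) = 0 from rfl]
  · have h' : sC M i * (t : CoxGroup M) * sC M i ≠ sC M i := (conj_eq_self_iff M i t).not.mpr h
    simp only [parityFun, h, h', if_false, sC_mul_sC_mul_mul_sC]

noncomputable def parityPerm (i : Fin n) : Equiv.Perm (ZMod 2 × Refl M) :=
  (parityFun_involutive M i).toPerm

lemma parityProj_semiconj_Uperm (i : Fin n) :
    Semiconj (parityProj M) (Uperm M i) (parityPerm M i) := by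
  rintro ⟨k, t⟩
  by_cases h : (t : CoxGroup M) = sC M i
  · simp [Uperm, UFun_pos M i 1 k t h, parityPerm, parityFun, parityProj, h]
  · simp [Uperm, UFun_neg M i 1 k t h, parityPerm, parityFun, parityProj, h]

section

variable {M} (U : ArtinGroup M →* Equiv.Perm (ℤ × Refl M)) (hU : ∀ i, U (σA M i) = Uperm M i)
include hU

lemma lift_parityPerm_eq_one_of_mem_coxRels :
    ∀ r ∈ coxRels M, FreeGroup.lift (parityPerm M) r = 1 := by
  rintro r (hr | ⟨i, rfl⟩)
  · have hsemiconj : ∀ w, Semiconj (parityProj M) (U (PresentedGroup.mk _ w))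
        (FreeGroup.lift (parityPerm M) w) :=
      Semiconj.of_closure_eq_top (FreeGroup.closure_range_of _)
        (U.comp (PresentedGroup.mk _)) _ _ (by
          rintro _ ⟨i, rfl⟩
          have hσ : PresentedGroup.mk (artinRels M) (FreeGroup.of i) = σA M i := rfl
          rw [MonoidHom.comp_apply, FreeGroup.lift_apply_of, hσ, hU]
          exact parityProj_semiconj_Uperm M i)
    refine Semiconj.eq_one_of_surjective ?_ (parityProj_surjective M)
    simpa [PresentedGroup.one_of_mem hr] using hsemiconj r
  · ext p : 1
    simpa [sq, parityPerm] using parityFun_involutive M i p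

noncomputable def parityAction : CoxGroup M →* Equiv.Perm (ZMod 2 × Refl M) :=
  PresentedGroup.toGroup (lift_parityPerm_eq_one_of_mem_coxRels U hU)

lemma parityProj_semiconj (g : ArtinGroup M) :
    Semiconj (parityProj M) (U g) (parityAction U hU (stdEpi M g)) :=
  Semiconj.of_closure_eq_top (PresentedGroup.closure_range_of _) U
    ((parityAction U hU).comp (stdEpi M)) _ (by
      rintro _ ⟨i, rfl⟩
      have hi : parityAction U hU (sC M i) = parityPerm M i := PresentedGroup.toGroup.of _
      show Semiconj _ (U (σA M i)) (parityAction U hU (stdEpi M (σA M i)))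
      rw [hU, stdEpi_of, hi]
      exact parityProj_semiconj_Uperm M i) g

end

end

theorem stmt_9_general {n : ℕ} (M : Matrix (Fin n) (Fin n) ℕ)
    (U : ArtinGroup M →* Equiv.Perm (ℤ × Refl M))
    (hU : ∀ i, U (σA M i) = Uperm M i)
    (g₁ g₂ : ArtinGroup M) (k : ℤ) (r : Refl M)
    (h : stdEpi M g₁ = stdEpi M g₂) :
    (U g₁ (k, r)).2 = (U g₂ (k, r)).2 ∧
    (U g₁ (k, r)).1 % 2 = (U g₂ (k, r)).1 % 2 := by
  have hproj : parityProj M (U g₁ (k, r)) = parityProj M (U g₂ (k, r)) := by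
    rw [parityProj_semiconj U hU g₁, parityProj_semiconj U hU g₂, h]
  obtain ⟨hparity, hrefl⟩ := Prod.ext_iff.mp hproj
  exact ⟨hrefl, (ZMod.intCast_eq_intCast_iff' _ _ 2).mp hparity⟩

/-- Corollary 3.8: if `μ(g₁) = μ(g₂)` then the actions of `g₁` and `g₂` on `ℤ × T`
agree on the reflection component and agree mod 2 on the integer component. -/
theorem stmt_9 {n : ℕ} (M : Matrix (Fin n) (Fin n) ℕ)
    (hdiag : ∀ i, M i i = 1) (hsymm : ∀ i j, M i j = M j i)
    (hoff : ∀ i j, i ≠ j → M i j ≠ 1)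
    (U : ArtinGroup M →* Equiv.Perm (ℤ × Refl M))
    (hU : ∀ i, U (σA M i) = Uperm M i)
    (g₁ g₂ : ArtinGroup M) (k : ℤ) (r : Refl M)
    (h : stdEpi M g₁ = stdEpi M g₂) :
    (U g₁ (k, r)).2 = (U g₂ (k, r)).2 ∧
    (U g₁ (k, r)).1 % 2 = (U g₂ (k, r)).1 % 2 :=
  stmt_9_general M U hU g₁ g₂ k r h
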